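/- arXiv:1712.02576 — 10 statements merged into one kernel-verified Lean document; each statement's English description precedes it below -/
import Mathlib

section
/- Let E = EuclideanSpace ℝ (Fin k), let A ⊆ E be a finite nonempty set, and suppose 0 does not lie in the ℝ-convex hull of A. Let B ∈ convexHull ℝ A satisfy ‖B‖ ≤ ‖y‖ for all y ∈ convexHull ℝ A (B is the closest point of the hull to the origin), so in particular B ≠ 0. Then the supremum, over unit vectors ρ ∈ E, of the minimum over a ∈ A of ⟪a, ρ⟫ equals ‖B‖, and this value is attained at ρ = ‖B‖⁻¹ • B. (This is the computation of the minimal value of the normalised Hilbert–Mumford function for an unstable point of a torus action: it equals the norm of the closest point B(x) to the origin of the state polytope, attained by the one-parameter subgroup obtained by exponentiating B(x).) -/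
open scoped RealInnerProductSpace

/-!
The closest point `B` of the convex hull `K` of `A` to the origin satisfies the variational
inequality `‖B‖² ≤ ⟪y, B⟫` for all `y ∈ K`. Hence every `a ∈ A` has `⟪a, B / ‖B‖⟫ ≥ ‖B‖`,
while for any unit `ρ` the minimum of `⟪·, ρ⟫` over `A` is also its minimum over `K`, so it
is at most `⟪B, ρ⟫ ≤ ‖B‖` by Cauchy–Schwarz.
-/

section

variable {F : Type*} [NormedAddCommGroup F] [InnerProductSpace ℝ F]

theorem Convex.norm_sq_le_inner_of_forall_norm_le {K : Set F} (hK : Convex ℝ K) {B : F}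
    (hB : B ∈ K) (hBmin : ∀ y ∈ K, ‖B‖ ≤ ‖y‖) {y : F} (hy : y ∈ K) : ‖B‖ ^ 2 ≤ ⟪y, B⟫ := by
  have : Nonempty K := ⟨⟨B, hB⟩⟩
  have hinf : ‖(0 : F) - B‖ = ⨅ w : K, ‖(0 : F) - w‖ :=
    le_antisymm (le_ciInf fun w => by simpa using hBmin w w.2)
      (ciInf_le ⟨0, Set.forall_mem_range.2 fun _ => norm_nonneg _⟩ (⟨B, hB⟩ : K))
  have hvar := (norm_eq_iInf_iff_real_inner_le_zero hK hB).mp hinf y hy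
  rw [zero_sub, inner_neg_left, inner_sub_right, real_inner_self_eq_norm_sq,
    real_inner_comm] at hvar
  linarith

theorem csInf_image_inner_le_of_mem_convexHull {A : Set F} {ρ x : F}
    (hbdd : BddBelow ((fun a => ⟪a, ρ⟫) '' A)) (hx : x ∈ convexHull ℝ A) :
    sInf ((fun a => ⟪a, ρ⟫) '' A) ≤ ⟪x, ρ⟫ := by
  have hsub : convexHull ℝ A ⊆ {w | sInf ((fun a => ⟪a, ρ⟫) '' A) ≤ ⟪w, ρ⟫} :=
    convexHull_min (fun a ha => csInf_le hbdd ⟨a, ha, rfl⟩)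
      (convex_halfSpace_ge (innerₛₗ ℝ |>.flip ρ).isLinear _)
  exact hsub hx

theorem csInf_image_inner_inv_norm_smul_eq_norm {A : Set F} (hA : A.Finite) (hne : A.Nonempty)
    {B : F} (hB0 : B ≠ 0) (hB : B ∈ convexHull ℝ A)
    (hBmin : ∀ y ∈ convexHull ℝ A, ‖B‖ ≤ ‖y‖) :
    sInf ((fun a => ⟪a, ‖B‖⁻¹ • B⟫) '' A) = ‖B‖ := by
  have hBpos : 0 < ‖B‖ := norm_pos_iff.mpr hB0
  refine le_antisymm ?_ (le_csInf (hne.image _) ?_)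
  · calc sInf ((fun a => ⟪a, ‖B‖⁻¹ • B⟫) '' A) ≤ ⟪B, ‖B‖⁻¹ • B⟫ :=
          csInf_image_inner_le_of_mem_convexHull (hA.image _).bddBelow hB
      _ = ‖B‖ := by
          rw [real_inner_smul_right, real_inner_self_eq_norm_sq]
          field_simp
  · rintro _ ⟨a, ha, rfl⟩
    have hvar := (convex_convexHull ℝ A).norm_sq_le_inner_of_forall_norm_le hB hBmin
      (subset_convexHull ℝ A ha)
    change ‖B‖ ≤ ⟪a, ‖B‖⁻¹ • B⟫
    rw [real_inner_smul_right, le_inv_mul_iff₀ hBpos]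
    linarith

end

/-- **Minimal value of the normalised Hilbert–Mumford function for an unstable point of a
torus action**: if the origin does not lie in the convex hull of the finite nonempty set of
weights `A`, and `B` is the closest point of the hull to the origin, then the supremum over
unit vectors `ρ` of the minimum over `a ∈ A` of `⟪a, ρ⟫` equals `‖B‖`, and this value is
attained at `ρ = ‖B‖⁻¹ • B`. -/
theorem stmt_3 (k : ℕ) (A : Set (EuclideanSpace ℝ (Fin k))) (hA : A.Finite)
    (hne : A.Nonempty) (h0 : (0 : EuclideanSpace ℝ (Fin k)) ∉ convexHull ℝ A)
    (B : EuclideanSpace ℝ (Fin k)) (hB : B ∈ convexHull ℝ A)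
    (hBmin : ∀ y ∈ convexHull ℝ A, ‖B‖ ≤ ‖y‖) :
    IsGreatest {r : ℝ | ∃ ρ : EuclideanSpace ℝ (Fin k), ‖ρ‖ = 1 ∧
        r = sInf ((fun a => ⟪a, ρ⟫) '' A)} ‖B‖ ∧
      sInf ((fun a => ⟪a, ‖B‖⁻¹ • B⟫) '' A) = ‖B‖ := by
  have hB0 : B ≠ 0 := fun h => h0 (h ▸ hB)
  have hattain := csInf_image_inner_inv_norm_smul_eq_norm hA hne hB0 hB hBmin
  refine ⟨⟨⟨‖B‖⁻¹ • B, norm_smul_inv_norm hB0, hattain.symm⟩, ?_⟩, hattain⟩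
  rintro _ ⟨ρ, hρ, rfl⟩
  calc sInf ((fun a => ⟪a, ρ⟫) '' A) ≤ ⟪B, ρ⟫ :=
        csInf_image_inner_le_of_mem_convexHull (hA.image _).bddBelow hB
    _ ≤ ‖B‖ * ‖ρ‖ := real_inner_le_norm B ρ
    _ = ‖B‖ := by rw [hρ, mul_one]
end

section
/- Let E = EuclideanSpace ℝ (Fin k), let A ⊆ E be a finite nonempty set with 0 not in convexHull ℝ A, and let B ∈ convexHull ℝ A satisfy ‖B‖ ≤ ‖y‖ for all y in convexHull ℝ A. If ρ ∈ E satisfies ‖ρ‖ = 1 and ⟪a, ρ⟫ ≥ ‖B‖ for all a ∈ A, then ρ = ‖B‖⁻¹ • B. (Uniqueness, up to positive scaling, of the maximally destabilising one-parameter subgroup of an unstable point for a torus action: the adapted one-parameter subgroup is the one obtained by exponentiating the closest point B(x) of the state polytope to the origin.) -/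
open scoped RealInnerProductSpace

/-!
The bound `‖B‖ ≤ ⟪a, ρ⟫` passes from the weights to their convex hull, in particular to `B`
itself, so `‖B‖ ≤ ⟪B, ρ⟫ ≤ ‖B‖ ‖ρ‖ = ‖B‖`: equality holds in Cauchy–Schwarz and `ρ` is the
direction of `B`, which is nonzero because `0` is not in the hull.
-/

section InnerProductSpace

variable {F : Type*} [NormedAddCommGroup F] [InnerProductSpace ℝ F]

theorem le_inner_of_mem_convexHull {s : Set F} {u y : F} {r : ℝ}
    (h : ∀ a ∈ s, r ≤ ⟪a, u⟫) (hy : y ∈ convexHull ℝ s) : r ≤ ⟪y, u⟫ :=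
  convexHull_min h
    (convex_halfSpace_ge ⟨(inner_add_left · · u), fun c a => real_inner_smul_left a u c⟩ r) hy

theorem eq_inv_norm_smul_of_norm_le_inner {x u : F} (hx : x ≠ 0) (hu : ‖u‖ = 1)
    (h : ‖x‖ ≤ ⟪x, u⟫) : u = ‖x‖⁻¹ • x := by
  have hinner : ⟪x, u⟫ = ‖x‖ * ‖u‖ :=
    le_antisymm (real_inner_le_norm x u) (by rwa [hu, mul_one])
  have hxu : x = ‖x‖ • u := by
    simpa only [hu, one_smul] using inner_eq_norm_mul_iff_real.mp hinner
  rw [hxu, smul_smul, norm_smul, norm_norm, hu, mul_one,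
    inv_mul_cancel₀ (norm_ne_zero_iff.mpr hx), one_smul]

end InnerProductSpace

theorem stmt_4_general (k : ℕ) (A : Set (EuclideanSpace ℝ (Fin k)))
    (h0 : (0 : EuclideanSpace ℝ (Fin k)) ∉ convexHull ℝ A)
    (B : EuclideanSpace ℝ (Fin k)) (hB : B ∈ convexHull ℝ A)
    (ρ : EuclideanSpace ℝ (Fin k)) (hρ : ‖ρ‖ = 1)
    (hdestab : ∀ a ∈ A, ‖B‖ ≤ ⟪a, ρ⟫) :
    ρ = ‖B‖⁻¹ • B :=
  eq_inv_norm_smul_of_norm_le_inner (fun hB0 => h0 (hB0 ▸ hB)) hρ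
    (le_inner_of_mem_convexHull hdestab hB)

/-- **Uniqueness of the maximally destabilising one-parameter subgroup for a torus action**:
if the origin does not lie in the convex hull of the finite nonempty set of weights `A`,
`B` is the closest point of the hull to the origin, and `ρ` is a unit vector with
`⟪a, ρ⟫ ≥ ‖B‖` for all `a ∈ A`, then `ρ = ‖B‖⁻¹ • B`. -/
theorem stmt_4 (k : ℕ) (A : Set (EuclideanSpace ℝ (Fin k))) (hA : A.Finite)
    (hne : A.Nonempty) (h0 : (0 : EuclideanSpace ℝ (Fin k)) ∉ convexHull ℝ A)
    (B : EuclideanSpace ℝ (Fin k)) (hB : B ∈ convexHull ℝ A)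
    (hBmin : ∀ y ∈ convexHull ℝ A, ‖B‖ ≤ ‖y‖)
    (ρ : EuclideanSpace ℝ (Fin k)) (hρ : ‖ρ‖ = 1)
    (hdestab : ∀ a ∈ A, ‖B‖ ≤ ⟪a, ρ⟫) :
    ρ = ‖B‖⁻¹ • B :=
  stmt_4_general k A h0 B hB ρ hρ hdestab
end

section
/- Let α : Fin (n+1) → ℤ be a weight vector and let x : Fin (n+1) → ℂ be nonzero. Let m be the minimum of α i over the support {i | x i ≠ 0}, and define y : Fin (n+1) → ℂ by y i = x i if α i = m and y i = 0 otherwise. Then y ≠ 0, and the map sending a nonzero t ∈ ℂ to the projective class of (fun i => t ^ (α i) * x i) in ℙⁿ(ℂ) tends, as t tends to 0 within ℂ \ {0}, to the projective class of y. (Existence and identification of the Białynicki-Birula limit p(x) = lim_{t→0} λ(t)·x for a diagonal 𝔾_m-action on projective space: the limit is supported exactly on the minimal-weight coordinates of the support of x.) -/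
/-!
Dividing the coordinates by `t ^ m` does not change the projective point, and turns
`t ^ (α i) * x i` into `t ^ (α i - m) * x i`. On the support of `x` all exponents `α i - m`
are nonnegative, so this normalized vector is continuous at `t = 0`, where it equals `y`;
since `y ≠ 0`, its class tends to `[y]` by continuity of the quotient map.
-/

open scoped LinearAlgebra.Projectivization

/-- The quotient topology on the projectivization of `Fin (n+1) → ℂ`. -/
noncomputable instance projTop {n : ℕ} : TopologicalSpace (ℙ ℂ (Fin (n + 1) → ℂ)) :=
  inferInstanceAs (TopologicalSpace (Quotient (projectivizationSetoid ℂ (Fin (n + 1) → ℂ))))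

theorem scale_ne_zero {n : ℕ} (α : Fin (n + 1) → ℤ) {x : Fin (n + 1) → ℂ} (hx : x ≠ 0)
    {t : ℂ} (ht : t ≠ 0) : (fun i => t ^ (α i) * x i) ≠ 0 := by
  obtain ⟨i, hi⟩ := Function.ne_iff.mp hx
  intro h
  have h2 := congrFun h i
  simp only [Pi.zero_apply, mul_eq_zero] at h2
  rcases h2 with h2 | h2
  · exact absurd h2 (zpow_ne_zero _ ht)
  · exact hi (by simpa using h2)

open Filter Topology

namespace Projectivization

theorem tendsto_of_tendsto_rep {n : ℕ} {β : Type*} {l : Filter β} {v : β → Fin (n + 1) → ℂ}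
    {w : Fin (n + 1) → ℂ} (hw : w ≠ 0) (hv : Tendsto v l (𝓝 w))
    {F : β → ℙ ℂ (Fin (n + 1) → ℂ)} (hF : ∀ᶠ b in l, ∃ hb : v b ≠ 0, F b = mk ℂ (v b) hb) :
    Tendsto F l (𝓝 (mk ℂ w hw)) := by
  classical
  let u : β → {v : Fin (n + 1) → ℂ // v ≠ 0} :=
    fun b => if hb : v b ≠ 0 then ⟨v b, hb⟩ else ⟨w, hw⟩
  have hu : Tendsto u l (𝓝 ⟨w, hw⟩) := by
    refine tendsto_subtype_rng.mpr (hv.congr' ?_)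
    filter_upwards [hF] with b ⟨hb, _⟩
    simp [u, hb]
  have hmk : Continuous (mk' ℂ : {v : Fin (n + 1) → ℂ // v ≠ 0} → ℙ ℂ (Fin (n + 1) → ℂ)) :=
    continuous_quotient_mk'
  refine ((hmk.tendsto _).comp hu).congr' ?_
  filter_upwards [hF] with b ⟨hb, hFb⟩
  simp only [Function.comp_apply, hFb, u, dif_pos hb, mk'_eq_mk]

theorem mk_zpow_mul_eq_mk_zpow_sub_mul {ι K : Type*} [Field K] (α : ι → ℤ) (x : ι → K)
    (m : ℤ) {t : K} (ht : t ≠ 0) (h₁ : (fun i => t ^ (α i) * x i) ≠ 0)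
    (h₂ : (fun i => t ^ (α i - m) * x i) ≠ 0) :
    mk K (fun i => t ^ (α i) * x i) h₁ = mk K (fun i => t ^ (α i - m) * x i) h₂ := by
  refine (mk_eq_mk_iff' K _ _ h₁ h₂).mpr ⟨t ^ m, funext fun i => ?_⟩
  simp only [Pi.smul_apply, smul_eq_mul, ← mul_assoc, ← zpow_add₀ ht, add_sub_cancel]

end Projectivization

theorem continuousAt_zpow_sub_mul_zero {ι 𝕜 : Type*} [NormedField 𝕜] (α : ι → ℤ)
    (x : ι → 𝕜) {m : ℤ} (hm : ∀ i, x i ≠ 0 → m ≤ α i) :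
    ContinuousAt (fun (t : 𝕜) i => t ^ (α i - m) * x i) 0 := by
  refine continuousAt_pi.mpr fun i => ?_
  by_cases hxi : x i = 0
  · simpa [hxi] using continuousAt_const
  · exact (continuousAt_zpow₀ _ _ (Or.inr (sub_nonneg.mpr (hm i hxi)))).mul continuousAt_const

theorem zero_zpow_sub_mul_eq_ite {ι G₀ : Type*} [GroupWithZero G₀] (α : ι → ℤ) (x : ι → G₀)
    (m : ℤ) : (fun i => (0 : G₀) ^ (α i - m) * x i) = fun i => if α i = m then x i else 0 := by
  funext i
  by_cases hi : α i = m
  · simp [hi]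
  · simp [hi, zero_zpow _ (sub_ne_zero.mpr hi)]

/-- **Białynicki-Birula limit for a diagonal `𝔾ₘ`-action on projective space**: for a
weight vector `α`, a nonzero point `x`, and `m` the minimum of `α` over the support of
`x`, the vector `y` keeping exactly the minimal-weight coordinates of the support of `x`
is nonzero, and the projective class of `i ↦ t ^ (α i) * x i` tends to the class of `y`
as `t → 0` within `ℂ \ {0}`. -/
theorem stmt_5 {n : ℕ} (α : Fin (n + 1) → ℤ) (x : Fin (n + 1) → ℂ) (hx : x ≠ 0)
    (m : ℤ) (hm : IsLeast {z : ℤ | ∃ i, x i ≠ 0 ∧ α i = z} m)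
    (y : Fin (n + 1) → ℂ) (hy : y = fun i => if α i = m then x i else 0)
    (f : ℂ → ℙ ℂ (Fin (n + 1) → ℂ))
    (hf : ∀ (t : ℂ) (ht : t ≠ 0),
      f t = Projectivization.mk ℂ (fun i => t ^ (α i) * x i) (scale_ne_zero α hx ht)) :
    ∃ hy0 : y ≠ 0,
      Filter.Tendsto f (nhdsWithin 0 {0}ᶜ) (nhds (Projectivization.mk ℂ y hy0)) := by
  obtain ⟨⟨i₀, hxi₀, hαi₀⟩, hm_le⟩ := hm
  have hy0 : y ≠ 0 := fun h => hxi₀ (by simpa [hy, hαi₀] using congrFun h i₀)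
  have hlim : Tendsto (fun (t : ℂ) i => t ^ (α i - m) * x i) (𝓝[≠] 0) (𝓝 y) := by
    rw [hy, ← zero_zpow_sub_mul_eq_ite]
    exact (continuousAt_zpow_sub_mul_zero α x fun i hi => hm_le ⟨i, hi, rfl⟩).tendsto.mono_left
      nhdsWithin_le_nhds
  refine ⟨hy0, Projectivization.tendsto_of_tendsto_rep hy0 hlim ?_⟩
  filter_upwards [self_mem_nhdsWithin] with t ht
  refine ⟨scale_ne_zero (fun i => α i - m) hx ht, ?_⟩
  rw [hf t ht]
  exact Projectivization.mk_zpow_mul_eq_mk_zpow_sub_mul α x m ht _ _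
end

section
/- Let α : Fin (n+1) → ℤ be a weight vector, let m₀ be the minimum of α i over all i ∈ Fin (n+1), and let x : Fin (n+1) → ℂ be nonzero. Then the limit, as t tends to 0 within ℂ \ {0}, of the projective class of (fun i => t ^ (α i) * x i) lies in the projectivized minimal weight space {[z] ∈ ℙⁿ(ℂ) | z i = 0 whenever α i ≠ m₀} if and only if there exists i with x i ≠ 0 and α i = m₀. (The basin of attraction X_min⁰ of the minimal fixed-point component X_min for the diagonal 𝔾_m-action on ℙⁿ, i.e. p⁻¹(X_min), is exactly the set of points having a nonzero coordinate in the minimal weight space.) -/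
/-!
Let `m` be the least weight occurring on the support of `x`. Multiplying the representative
`i ↦ t ^ α i * x i` by `t ^ (-m)` gives `i ↦ t ^ (α i - m) * x i`, a curve with nonnegative
exponents that extends continuously to `t = 0`, where it keeps exactly the coordinates of
weight `m`. So the limit point is the class of that leading part, and it lies in `X_min`
precisely when `m` is the global minimum `m₀`, i.e. when `x` has a nonzero coordinate of
weight `m₀`.
-/

open scoped LinearAlgebra.Projectivization RealInnerProductSpace

open Filter Topology

namespace Projectivization

theorem rep_mk_apply_eq_zero_iff {K ι : Type*} [DivisionRing K] {v : ι → K} (hv : v ≠ 0)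
    (i : ι) : (mk K v hv).rep i = 0 ↔ v i = 0 := by
  obtain ⟨a, ha⟩ := exists_smul_eq_mk_rep K v hv
  rw [← ha, Pi.smul_apply, Units.smul_def, smul_eq_mul, mul_eq_zero, or_iff_right a.ne_zero]

theorem continuous_mk_comp {X : Type*} [TopologicalSpace X] {n : ℕ} {g : X → Fin (n + 1) → ℂ}
    (hg : Continuous g) (hne : ∀ t, g t ≠ 0) :
    Continuous fun t => mk ℂ (g t) (hne t) :=
  continuous_quotient_mk'.comp (hg.subtype_mk hne)

end Projectivization

section WeightCurve

variable {n : ℕ} (α : Fin (n + 1) → ℤ)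

theorem exists_minimal_weight_on_support {x : Fin (n + 1) → ℂ} (hx : x ≠ 0) :
    ∃ i₀, x i₀ ≠ 0 ∧ ∀ j, x j ≠ 0 → α i₀ ≤ α j := by
  classical
  obtain ⟨i, hi⟩ := Function.ne_iff.mp hx
  obtain ⟨i₀, hi₀, hmin⟩ := Finset.exists_min_image
    (Finset.univ.filter fun i => x i ≠ 0) α ⟨i, by simpa using hi⟩
  exact ⟨i₀, by simpa using hi₀, fun j hj => hmin j (by simpa using hj)⟩

/-- `t ^ (-m)` times the orbit representative `i ↦ t ^ α i * x i`, as a polynomial curve in `t`.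
The truncation by `toNat` is harmless once `m` is at most every weight on the support of `x`. -/
def weightCurve (m : ℤ) (x : Fin (n + 1) → ℂ) (t : ℂ) : Fin (n + 1) → ℂ :=
  fun i => t ^ (α i - m).toNat * x i

variable {α}

theorem continuous_weightCurve (m : ℤ) (x : Fin (n + 1) → ℂ) :
    Continuous (weightCurve α m x) :=
  continuous_pi fun _ => (continuous_pow _).mul continuous_const

theorem weightCurve_zero_apply (m : ℤ) (x : Fin (n + 1) → ℂ) (i : Fin (n + 1)) :
    weightCurve α m x 0 i = if α i ≤ m then x i else 0 := by
  unfold weightCurve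
  split_ifs with h
  · rw [Int.toNat_eq_zero.mpr (by omega), pow_zero, one_mul]
  · rw [zero_pow (by omega), zero_mul]

theorem weightCurve_ne_zero {m : ℤ} {x : Fin (n + 1) → ℂ} {i₀ : Fin (n + 1)} (hx : x i₀ ≠ 0)
    (hi₀ : α i₀ ≤ m) (t : ℂ) : weightCurve α m x t ≠ 0 := by
  refine Function.ne_iff.mpr ⟨i₀, ?_⟩
  rw [weightCurve, Int.toNat_eq_zero.mpr (by omega), pow_zero, one_mul]
  exact hx

theorem zpow_smul_weighted_eq_weightCurve {m : ℤ} {x : Fin (n + 1) → ℂ}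
    (hm : ∀ j, x j ≠ 0 → m ≤ α j) {t : ℂ} (ht : t ≠ 0) :
    t ^ (-m) • (fun i => t ^ α i * x i) = weightCurve α m x t := by
  funext i
  rw [Pi.smul_apply, smul_eq_mul, weightCurve]
  by_cases hxi : x i = 0
  · simp only [hxi, mul_zero]
  · rw [← zpow_natCast, Int.toNat_of_nonneg (by linarith [hm i hxi]), ← mul_assoc,
      ← zpow_add₀ ht, neg_add_eq_sub]

end WeightCurve

/-- **The basin of attraction of the minimal fixed-point component**: for the diagonal
`𝔾ₘ`-action on `ℙⁿ` with weights `α` and global minimal weight `m₀`, the limit as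
`t → 0` of the class of `i ↦ t ^ (α i) * x i` lies in the projectivized minimal weight
space `X_min` (points whose representatives vanish on all coordinates of non-minimal
weight) if and only if `x` has a nonzero coordinate of minimal weight. -/
theorem stmt_6 {n : ℕ} (α : Fin (n + 1) → ℤ) (m₀ : ℤ) (hm₀ : IsLeast (Set.range α) m₀)
    (x : Fin (n + 1) → ℂ) (hx : x ≠ 0)
    (f : ℂ → ℙ ℂ (Fin (n + 1) → ℂ))
    (hf : ∀ (t : ℂ) (ht : t ≠ 0),
      f t = Projectivization.mk ℂ (fun i => t ^ (α i) * x i) (scale_ne_zero α hx ht)) :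
    ∃ L : ℙ ℂ (Fin (n + 1) → ℂ),
      Filter.Tendsto f (nhdsWithin 0 {0}ᶜ) (nhds L) ∧
        (L ∈ {p : ℙ ℂ (Fin (n + 1) → ℂ) | ∀ i, α i ≠ m₀ → p.rep i = 0} ↔
          ∃ i, x i ≠ 0 ∧ α i = m₀) := by
  obtain ⟨i₀, hxi₀, hmin⟩ := exists_minimal_weight_on_support α hx
  have hne : ∀ t, weightCurve α (α i₀) x t ≠ 0 := weightCurve_ne_zero hxi₀ le_rfl
  have hm₀_le (i) : m₀ ≤ α i := hm₀.2 ⟨i, rfl⟩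
  refine ⟨Projectivization.mk ℂ _ (hne 0), ?_, ?_⟩
  · have hcont := Projectivization.continuous_mk_comp (continuous_weightCurve _ x) hne
    refine ((hcont.tendsto 0).mono_left nhdsWithin_le_nhds).congr' ?_
    filter_upwards [self_mem_nhdsWithin] with t (ht : t ≠ 0)
    rw [hf t ht, Projectivization.mk_eq_mk_iff']
    exact ⟨t ^ (-α i₀), zpow_smul_weighted_eq_weightCurve hmin ht⟩
  · simp only [Set.mem_ofPred_eq, Projectivization.rep_mk_apply_eq_zero_iff,
      weightCurve_zero_apply]
    constructor
    · intro hvanish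
      refine ⟨i₀, hxi₀, by_contra fun h => hxi₀ ?_⟩
      simpa using hvanish i₀ h
    · rintro ⟨j, hxj, rfl⟩ i hi
      have hlt : ¬α i ≤ α i₀ := by linarith [(hm₀_le i).lt_of_ne' hi, hm₀_le i₀, hmin j hxj]
      rw [if_neg hlt]
end

section
/- Let E = EuclideanSpace ℝ (Fin k), let α : Fin (n+1) → E be a family of weight vectors, and let β ∈ E. Then the set Y_β = { [x] ∈ ℙⁿ(ℂ) | (for all i, x i ≠ 0 implies ⟪α i, β⟫ ≥ ‖β‖²) and (there exists i with x i ≠ 0 and ⟪α i, β⟫ = ‖β‖²) } is a locally closed subset of ℙⁿ(ℂ), i.e. the intersection of an open set and a closed set. (For a linear torus action, the subvariety Y_β of points all of whose support weights lie in the half-space H_β⁺ with at least one support weight on the hyperplane H_β is locally closed.) -/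
open scoped LinearAlgebra.Projectivization RealInnerProductSpace

/-! The support of a point of `ℙⁿ` does not depend on the representative, so the support
conditions cut out a closed set (weights off `H_β⁺` must vanish) intersected with an open set
(some weight on `H_β` must not vanish). -/

theorem isLocallyClosed_setOf_forall_mem_imp_and_exists_mem {X ι : Type*} [TopologicalSpace X]
    {s : ι → Set X} (hs : ∀ i, IsOpen (s i)) (P Q : ι → Prop) :
    IsLocallyClosed {x | (∀ i, x ∈ s i → P i) ∧ ∃ i, x ∈ s i ∧ Q i} := by
  have hclosed : IsClosed {x | ∀ i, x ∈ s i → P i} := by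
    simp only [Set.ofPred_forall]
    refine isClosed_iInter fun i => ?_
    by_cases hP : P i
    · simp [hP]
    · simp only [hP, imp_false]
      exact (hs i).isClosed_compl
  have hopen : IsOpen {x | ∃ i, x ∈ s i ∧ Q i} := by
    simp only [Set.ofPred_exists]
    refine isOpen_iUnion fun i => ?_
    by_cases hQ : Q i
    · simpa [hQ] using hs i
    · simp [hQ]
  exact hclosed.isLocallyClosed.inter hopen.isLocallyClosed

theorem Projectivization.rep_apply_eq_zero_iff {K ι : Type*} [Field K] {v : ι → K} (hv : v ≠ 0)
    (i : ι) : (mk K v hv).rep i = 0 ↔ v i = 0 := by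
  obtain ⟨a, ha⟩ := exists_smul_eq_mk_rep K v hv
  simp [← ha, Units.smul_def]

theorem isOpen_setOf_rep_apply_ne_zero {n : ℕ} (i : Fin (n + 1)) :
    IsOpen {p : ℙ ℂ (Fin (n + 1) → ℂ) | p.rep i ≠ 0} := by
  have hquot : Topology.IsQuotientMap
      (fun v : {v : Fin (n + 1) → ℂ // v ≠ 0} => Projectivization.mk ℂ v.1 v.2) :=
    isQuotientMap_quot_mk
  rw [← hquot.isOpen_preimage]
  simp only [Set.preimage_ofPred_eq, ne_eq, Projectivization.rep_apply_eq_zero_iff]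
  exact isOpen_ne_fun ((continuous_apply i).comp continuous_subtype_val) continuous_const

/-- **The subvariety `Y_β` is locally closed**: for a linear torus action on `ℙⁿ` with
weights `α i` in Euclidean space, the set of points all of whose support weights lie in
the half-space `H_β⁺ = {v | ⟪v, β⟫ ≥ ‖β‖²}` with at least one support weight on the
hyperplane `H_β = {v | ⟪v, β⟫ = ‖β‖²}` is a locally closed subset of `ℙⁿ(ℂ)`. -/
theorem stmt_9 (n k : ℕ) (α : Fin (n + 1) → EuclideanSpace ℝ (Fin k))
    (β : EuclideanSpace ℝ (Fin k)) :
    IsLocallyClosed {p : ℙ ℂ (Fin (n + 1) → ℂ) |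
      (∀ i, p.rep i ≠ 0 → ‖β‖ ^ 2 ≤ ⟪α i, β⟫) ∧ ∃ i, p.rep i ≠ 0 ∧ ⟪α i, β⟫ = ‖β‖ ^ 2} :=
  isLocallyClosed_setOf_forall_mem_imp_and_exists_mem isOpen_setOf_rep_apply_ne_zero _ _
end

section
/- Let α : Fin (n+1) → ℤ be a weight vector which is not constant, let α_min be its minimum over Fin (n+1), and let α₂ be the minimum of α i over those i with α i ≠ α_min. Let c ∈ ℚ satisfy α_min < c < α₂ (an adapted character). Then for every nonzero x : Fin (n+1) → ℂ, the following are equivalent: (i) min{ α i | x i ≠ 0 } < c and c < max{ α i | x i ≠ 0 }; (ii) there exists i with x i ≠ 0 and α i = α_min, and there exists j with x j ≠ 0 and α j ≠ α_min. In particular the locus described by (i) is the same for every adapted c. (For an adapted linearisation, the 𝔾_m-stable locus of ℙⁿ equals p⁻¹(X_min) \ X_min, and in particular is independent of the choice of ample well-adapted linearisation; this is the key step in the proof that X∥_𝓛 Û is independent of the well-adapted linearisation 𝓛.) -/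
/-!
A weight `a` of `α` is either the minimum `αmin` or at least the second-lowest value `α₂`.
Since `αmin < c < α₂`, a weight lies below `c` exactly when it is minimal and above `c` exactly
when it is not, so both sides of the equivalence say the same thing coordinatewise.
-/

section AdaptedCharacter

variable {β : Type*} [LinearOrder β] {a m m₂ c : β}

theorem lt_iff_eq_of_lt_of_lt (ha : a ≠ m → m₂ ≤ a) (hm : m < c) (hm₂ : c < m₂) :
    a < c ↔ a = m := by
  refine ⟨fun hac => ?_, fun ham => ham ▸ hm⟩
  by_contra ham
  exact (ha ham).not_gt (hac.trans hm₂)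

theorem lt_iff_ne_of_lt_of_lt (ha : a ≠ m → m₂ ≤ a) (hm : m < c) (hm₂ : c < m₂) :
    c < a ↔ a ≠ m :=
  ⟨fun hca ham => (ham ▸ hca).not_gt hm, fun ham => hm₂.trans_le (ha ham)⟩

end AdaptedCharacter

theorem stmt_11_general {n : ℕ} (α : Fin (n + 1) → ℤ)
    (αmin : ℤ)
    (α₂ : ℤ) (hα₂ : IsLeast {z : ℤ | ∃ i, α i = z ∧ z ≠ αmin} α₂)
    (c : ℚ) (hc1 : (αmin : ℚ) < c) (hc2 : c < (α₂ : ℚ))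
    (x : Fin (n + 1) → ℂ) :
    ((∃ i, x i ≠ 0 ∧ (α i : ℚ) < c) ∧ (∃ j, x j ≠ 0 ∧ c < (α j : ℚ))) ↔
      ((∃ i, x i ≠ 0 ∧ α i = αmin) ∧ (∃ j, x j ≠ 0 ∧ α j ≠ αmin)) := by
  have hgap (i : Fin (n + 1)) : (α i : ℚ) ≠ αmin → (α₂ : ℚ) ≤ α i := fun hi =>
    Int.cast_le.mpr (hα₂.2 ⟨i, rfl, fun h => hi (congrArg _ h)⟩)
  have hbelow (i : Fin (n + 1)) : (α i : ℚ) < c ↔ α i = αmin :=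
    (lt_iff_eq_of_lt_of_lt (hgap i) hc1 hc2).trans Int.cast_inj
  have habove (i : Fin (n + 1)) : c < (α i : ℚ) ↔ α i ≠ αmin :=
    (lt_iff_ne_of_lt_of_lt (hgap i) hc1 hc2).trans Int.cast_inj.not
  simp only [hbelow, habove]

/-- **Independence of the 𝔾ₘ-stable locus from the choice of adapted character**: let
`α` be a non-constant weight vector for the diagonal `𝔾ₘ`-action on `ℙⁿ`, with global
minimum `αmin` and second-lowest weight value `α₂`, and let `c` be an adapted rational
character, i.e. `αmin < c < α₂`. Then for every nonzero `x`, the Hilbert–Mumford stability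
condition (the minimum of `α` over the support of `x` is `< c` and the maximum is `> c`)
holds if and only if `x` has a nonzero coordinate of minimal weight and a nonzero
coordinate of non-minimal weight; in particular the stable locus `p⁻¹(X_min) \ X_min` is
the same for every adapted `c`. -/
theorem stmt_11 {n : ℕ} (α : Fin (n + 1) → ℤ) (hnc : ∃ i j, α i ≠ α j)
    (αmin : ℤ) (hαmin : IsLeast (Set.range α) αmin)
    (α₂ : ℤ) (hα₂ : IsLeast {z : ℤ | ∃ i, α i = z ∧ z ≠ αmin} α₂)
    (c : ℚ) (hc1 : (αmin : ℚ) < c) (hc2 : c < (α₂ : ℚ))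
    (x : Fin (n + 1) → ℂ) (hx : x ≠ 0) :
    ((∃ i, x i ≠ 0 ∧ (α i : ℚ) < c) ∧ (∃ j, x j ≠ 0 ∧ c < (α j : ℚ))) ↔
      ((∃ i, x i ≠ 0 ∧ α i = αmin) ∧ (∃ j, x j ≠ 0 ∧ α j ≠ αmin)) :=
  stmt_11_general α αmin α₂ hα₂ c hc1 hc2 x
end

section
/- Let E = EuclideanSpace ℝ (Fin k) and let α : Fin (n+1) → E be a family of weight vectors. For nonzero x : Fin (n+1) → ℂ, let β(x) denote the unique point of minimal norm of the nonempty compact convex set convexHull ℝ {α i | x i ≠ 0}. Then for every β₀ ∈ E, the closure in ℙⁿ(ℂ) of the stratum S_{β₀} = { [x] | β(x) = β₀ } is contained in { [x] | ‖β(x)‖ ≥ ‖β₀‖ }. (The closure of a stratum S_β of the β-stratification meets only strata S_γ with ‖γ‖ ≥ ‖β‖; this is the closure property in Kirwan's stratification theorem, in the case of a torus acting diagonally on ℙⁿ.) -/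
open scoped LinearAlgebra.Projectivization RealInnerProductSpace

/-!
Moving a point `p` slightly can only enlarge its support, since the nonvanishing of finitely
many coordinates is an open condition. Hence every point of `S_{β₀}` close enough to a point
`p` of its closure has a weight polytope containing that of `p`, in particular containing
`β(p)`; minimality of `β₀` in that larger polytope gives `‖β₀‖ ≤ ‖β(p)‖`.
-/

namespace Projectivization

theorem rep_apply_ne_zero_iff {K ι : Type*} [DivisionRing K] {y : ι → K} (hy : y ≠ 0)
    (i : ι) : (mk K y hy).rep i ≠ 0 ↔ y i ≠ 0 := by
  obtain ⟨a, ha⟩ := (mk_eq_mk_iff K _ _ (rep_nonzero _) hy).mp (mk_rep _)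
  rw [← ha, Pi.smul_apply, Units.smul_def, smul_eq_mul, mul_ne_zero_iff]
  exact ⟨And.right, And.intro a.ne_zero⟩

theorem isOpen_setOf_rep_apply_ne_zero {n : ℕ} (s : Set (Fin (n + 1))) :
    IsOpen {q : ℙ ℂ (Fin (n + 1) → ℂ) | ∀ i ∈ s, q.rep i ≠ 0} := by
  let π : {v : Fin (n + 1) → ℂ // v ≠ 0} → ℙ ℂ (Fin (n + 1) → ℂ) :=
    Quotient.mk (projectivizationSetoid ℂ _)
  have hπ : Topology.IsQuotientMap π := isQuotientMap_quotient_mk'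
  have hpre : π ⁻¹' {q | ∀ i ∈ s, q.rep i ≠ 0} = ⋂ i ∈ s, {v | v.val i ≠ 0} := by
    ext v
    simp only [Set.mem_preimage, Set.mem_iInter, Set.mem_ofPred_eq]
    exact forall₂_congr fun i _ => rep_apply_ne_zero_iff v.prop i
  rw [← hπ.isOpen_preimage, hpre]
  exact s.toFinite.isOpen_biInter fun i _ =>
    isOpen_ne.preimage ((continuous_apply i).comp continuous_subtype_val)

theorem exists_support_superset_of_mem_closure {n : ℕ} {S : Set (ℙ ℂ (Fin (n + 1) → ℂ))}
    {p : ℙ ℂ (Fin (n + 1) → ℂ)} (hp : p ∈ closure S) :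
    ∃ q ∈ S, ∀ i, p.rep i ≠ 0 → q.rep i ≠ 0 := by
  obtain ⟨q, hqU, hqS⟩ :=
    mem_closure_iff.mp hp _ (isOpen_setOf_rep_apply_ne_zero {i | p.rep i ≠ 0}) fun _ hi => hi
  exact ⟨q, hqS, hqU⟩

end Projectivization

/-- **Closure property of the β-stratification** (Kirwan), for a torus acting diagonally on
`ℙⁿ`: let `b` assign to each point of `ℙⁿ(ℂ)` the closest point to the origin of the
convex hull of its support weights (the point `β(x)` of minimal norm of the state
polytope). Then the closure of the stratum `S_{β₀} = {[x] | β(x) = β₀}` is contained in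
`{[x] | ‖β(x)‖ ≥ ‖β₀‖}`. -/
theorem stmt_12 (n k : ℕ) (α : Fin (n + 1) → EuclideanSpace ℝ (Fin k))
    (b : ℙ ℂ (Fin (n + 1) → ℂ) → EuclideanSpace ℝ (Fin k))
    (hb : ∀ (x : Fin (n + 1) → ℂ) (hx : x ≠ 0),
      b (Projectivization.mk ℂ x hx) ∈
          convexHull ℝ {v : EuclideanSpace ℝ (Fin k) | ∃ i, x i ≠ 0 ∧ α i = v} ∧
        ∀ y ∈ convexHull ℝ {v : EuclideanSpace ℝ (Fin k) | ∃ i, x i ≠ 0 ∧ α i = v},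
          ‖b (Projectivization.mk ℂ x hx)‖ ≤ ‖y‖)
    (β₀ : EuclideanSpace ℝ (Fin k)) :
    closure {p : ℙ ℂ (Fin (n + 1) → ℂ) | b p = β₀} ⊆
      {p : ℙ ℂ (Fin (n + 1) → ℂ) | ‖β₀‖ ≤ ‖b p‖} := by
  intro p hp
  obtain ⟨q, hqβ₀, hsupp⟩ := Projectivization.exists_support_superset_of_mem_closure hp
  have hp_mem := (hb p.rep p.rep_nonzero).1
  have hq_min := (hb q.rep q.rep_nonzero).2
  rw [Projectivization.mk_rep] at hp_mem hq_min
  have hweights : {v | ∃ i, p.rep i ≠ 0 ∧ α i = v} ⊆ {v | ∃ i, q.rep i ≠ 0 ∧ α i = v} :=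
    fun _ ⟨i, hi, hv⟩ => ⟨i, hsupp i hi, hv⟩
  exact hqβ₀ ▸ hq_min _ (convexHull_mono hweights hp_mem)
end

section
/- Let E = EuclideanSpace ℝ (Fin k) and let α : Fin (n+1) → E be a family of weight vectors. Then the set { [x] ∈ ℙⁿ(ℂ) | 0 ∈ convexHull ℝ {α i | x i ≠ 0} } is an open subset of ℙⁿ(ℂ). (The semistable locus S_0 = X^{ss} is the open stratum of the β-stratification; this is the openness assertion of Kirwan's stratification theorem for a torus acting diagonally on ℙⁿ, combined with the torus Hilbert–Mumford criterion identifying semistability with 0 lying in the state polytope.) -/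
open scoped LinearAlgebra.Projectivization RealInnerProductSpace

open Function Filter Topology

section Support

variable {ι M : Type*} [Finite ι] [TopologicalSpace M] [T1Space M] [Zero M]

theorem eventually_support_subset_support (x : ι → M) :
    ∀ᶠ y in 𝓝 x, support x ⊆ support y :=
  eventually_all.2 fun i => by
    by_cases hi : x i = 0
    · exact Eventually.of_forall fun y h => absurd hi h
    · exact ((continuous_apply i).continuousAt.eventually_ne hi).mono fun y hy _ => hy

theorem Monotone.isOpen_setOf_support {P : Set ι → Prop} (hP : Monotone P) :
    IsOpen {x : ι → M | P (support x)} :=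
  isOpen_iff_mem_nhds.2 fun x hx =>
    (eventually_support_subset_support x).mono fun _ hxy => hP hxy hx

end Support

theorem Projectivization.support_rep_mk {ι K : Type*} [Field K] (v : ι → K) (hv : v ≠ 0) :
    support (mk K v hv).rep = support v := by
  obtain ⟨a, ha⟩ := exists_smul_eq_mk_rep K v hv
  rw [← ha, Units.smul_def, support_const_smul_of_ne_zero _ _ a.ne_zero]

theorem Projectivization.isOpen_of_isOpen_preimage_mk {n : ℕ}
    {s : Set (ℙ ℂ (Fin (n + 1) → ℂ))}
    (hs : IsOpen {v : {v : Fin (n + 1) → ℂ // v ≠ 0} | mk ℂ v.1 v.2 ∈ s}) : IsOpen s :=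
  isQuotientMap_quotient_mk'.isOpen_preimage.1 hs

/-- **Openness of the semistable locus** (the open stratum `S₀ = Xˢˢ` of the
β-stratification) for a torus acting diagonally on `ℙⁿ`: by the torus Hilbert–Mumford
criterion, the semistable locus is the set of points whose state polytope (the convex hull
of the support weights) contains the origin, and this set is open in `ℙⁿ(ℂ)`. -/
theorem stmt_13 (n k : ℕ) (α : Fin (n + 1) → EuclideanSpace ℝ (Fin k)) :
    IsOpen {p : ℙ ℂ (Fin (n + 1) → ℂ) |
      (0 : EuclideanSpace ℝ (Fin k)) ∈
        convexHull ℝ {v : EuclideanSpace ℝ (Fin k) | ∃ i, p.rep i ≠ 0 ∧ α i = v}} := by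
  set P : Set (Fin (n + 1)) → Prop :=
    fun s => (0 : EuclideanSpace ℝ (Fin k)) ∈ convexHull ℝ (α '' s)
  have hP : Monotone P := fun s t hst h => convexHull_mono (Set.image_mono hst) h
  refine Projectivization.isOpen_of_isOpen_preimage_mk ?_
  have hpre :
      {v : {v : Fin (n + 1) → ℂ // v ≠ 0} | P (support (Projectivization.mk ℂ v.1 v.2).rep)} =
        Subtype.val ⁻¹' {x | P (support x)} := by
    ext v
    exact iff_of_eq (congrArg P (Projectivization.support_rep_mk v.1 v.2))
  exact hpre ▸ hP.isOpen_setOf_support.preimage continuous_subtype_val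
end

section
/- Let E = EuclideanSpace ℝ (Fin k), let α : Fin (n+1) → E, let β ∈ E with β ≠ 0, and let x : Fin (n+1) → ℂ be nonzero with ⟪α i, β⟫ ≥ ‖β‖² for every i with x i ≠ 0 (i.e. all support weights lie in the half-space H_β⁺). Then β is the point of minimal norm of convexHull ℝ {α i | x i ≠ 0} if and only if β belongs to convexHull ℝ {α i | x i ≠ 0 and ⟪α i, β⟫ = ‖β‖²}. (For a point of Y_β, the one-parameter subgroup λ_β is adapted to x exactly when it is adapted to the limit point p_β(x) ∈ Z_β, whose support weights are the support weights of x lying on H_β; equivalently, Y_β^{ss} = p_β^{-1}(Z_β^{ss}).) -/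
/-!
The support weights lie in the half-space `⟪·, β⟫ ≥ ‖β‖²`, hence so does their convex hull `P`.
By Cauchy–Schwarz every point of that half-space has norm at least `‖β‖`, so `β` is the point of
minimal norm of `P` as soon as it lies in `P`. Conversely `β` lies on the bounding hyperplane,
and a point of `P` on a supporting hyperplane is a convex combination of the generators lying on
that hyperplane: the weights of the others must vanish.
-/

open scoped RealInnerProductSpace

section Face

variable {𝕜 E : Type*} [Field 𝕜] [LinearOrder 𝕜] [IsStrictOrderedRing 𝕜]
  [AddCommGroup E] [Module 𝕜 E]

theorem mem_convexHull_inter_of_forall_le {s : Set E} {f : E →ₗ[𝕜] 𝕜} {c : 𝕜}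
    (hs : ∀ v ∈ s, c ≤ f v) {x : E} (hx : x ∈ convexHull 𝕜 s) (hfx : f x = c) :
    x ∈ convexHull 𝕜 (s ∩ {v | f v = c}) := by
  classical
  rw [convexHull_eq] at hx
  obtain ⟨ι, t, w, z, hw₀, hw₁, hz, rfl⟩ := hx
  have hexcess_nonneg : ∀ i ∈ t, 0 ≤ w i * (f (z i) - c) := fun i hi =>
    mul_nonneg (hw₀ i hi) (sub_nonneg.2 (hs _ (hz i hi)))
  have hexcess_sum : ∑ i ∈ t, w i * (f (z i) - c) = 0 := by
    rw [Finset.centerMass_eq_of_sum_1 _ _ hw₁, map_sum] at hfx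
    simp only [map_smul, smul_eq_mul] at hfx
    simp only [mul_sub, Finset.sum_sub_distrib, ← Finset.sum_mul, hfx, hw₁, one_mul, sub_self]
  have hface : ∀ i ∈ t, w i ≠ 0 → f (z i) = c := fun i hi hwi =>
    sub_eq_zero.1 <| (mul_eq_zero.1 <|
      (Finset.sum_eq_zero_iff_of_nonneg hexcess_nonneg).1 hexcess_sum i hi).resolve_left hwi
  rw [← Finset.centerMass_filter_ne_zero]
  refine Finset.centerMass_mem_convexHull _ (fun i hi => hw₀ i (Finset.mem_filter.1 hi).1)
    (by rw [Finset.sum_filter_ne_zero, hw₁]; exact one_pos) fun i hi => ?_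
  obtain ⟨hit, hwi⟩ := Finset.mem_filter.1 hi
  exact ⟨hz i hit, hface i hit hwi⟩

end Face

theorem norm_le_of_sq_norm_le_inner {E : Type*} [NormedAddCommGroup E] [InnerProductSpace ℝ E]
    {β y : E} (h : ‖β‖ ^ 2 ≤ ⟪y, β⟫) : ‖β‖ ≤ ‖y‖ := by
  nlinarith [real_inner_le_norm y β, norm_nonneg y, norm_nonneg β]

theorem stmt_15_general (n k : ℕ) (α : Fin (n + 1) → EuclideanSpace ℝ (Fin k))
    (β : EuclideanSpace ℝ (Fin k))
    (x : Fin (n + 1) → ℂ)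
    (hY : ∀ i, x i ≠ 0 → ‖β‖ ^ 2 ≤ ⟪α i, β⟫) :
    (β ∈ convexHull ℝ {v : EuclideanSpace ℝ (Fin k) | ∃ i, x i ≠ 0 ∧ α i = v} ∧
        ∀ y ∈ convexHull ℝ {v : EuclideanSpace ℝ (Fin k) | ∃ i, x i ≠ 0 ∧ α i = v},
          ‖β‖ ≤ ‖y‖) ↔
      β ∈ convexHull ℝ
        {v : EuclideanSpace ℝ (Fin k) | ∃ i, (x i ≠ 0 ∧ ⟪α i, β⟫ = ‖β‖ ^ 2) ∧ α i = v} := by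
  set S : Set (EuclideanSpace ℝ (Fin k)) := {v | ∃ i, x i ≠ 0 ∧ α i = v}
  set f := (innerₗ (EuclideanSpace ℝ (Fin k))).flip β
  have hS : ∀ v ∈ S, ‖β‖ ^ 2 ≤ f v := by rintro _ ⟨i, hi, rfl⟩; exact hY i hi
  constructor
  · rintro ⟨hβS, -⟩
    refine convexHull_mono ?_
      (mem_convexHull_inter_of_forall_le hS hβS (real_inner_self_eq_norm_sq β))
    rintro _ ⟨⟨i, hi, rfl⟩, hface⟩
    exact ⟨i, ⟨hi, hface⟩, rfl⟩
  · intro hβ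
    have hhalf : convexHull ℝ S ⊆ {v | ‖β‖ ^ 2 ≤ f v} :=
      convexHull_min hS (convex_halfSpace_ge f.isLinear _)
    refine ⟨convexHull_mono ?_ hβ, fun y hy => norm_le_of_sq_norm_le_inner (hhalf hy)⟩
    rintro _ ⟨i, ⟨hi, -⟩, rfl⟩
    exact ⟨i, hi, rfl⟩

/-- **`Y_β^{ss} = p_β⁻¹(Z_β^{ss})`**: let `x` be a nonzero point all of whose support
weights lie in the half-space `H_β⁺ = {v | ⟪v, β⟫ ≥ ‖β‖²}`. Then `β` is the point of
minimal norm of the state polytope of `x` (i.e. `λ_β` is adapted to `x`) if and only if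
`β` lies in the convex hull of those support weights of `x` lying on the hyperplane
`H_β = {v | ⟪v, β⟫ = ‖β‖²}`, i.e. the support weights of the limit point `p_β(x)`. -/
theorem stmt_15 (n k : ℕ) (α : Fin (n + 1) → EuclideanSpace ℝ (Fin k))
    (β : EuclideanSpace ℝ (Fin k)) (hβ : β ≠ 0)
    (x : Fin (n + 1) → ℂ) (hx : x ≠ 0)
    (hY : ∀ i, x i ≠ 0 → ‖β‖ ^ 2 ≤ ⟪α i, β⟫) :
    (β ∈ convexHull ℝ {v : EuclideanSpace ℝ (Fin k) | ∃ i, x i ≠ 0 ∧ α i = v} ∧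
        ∀ y ∈ convexHull ℝ {v : EuclideanSpace ℝ (Fin k) | ∃ i, x i ≠ 0 ∧ α i = v},
          ‖β‖ ≤ ‖y‖) ↔
      β ∈ convexHull ℝ
        {v : EuclideanSpace ℝ (Fin k) | ∃ i, (x i ≠ 0 ∧ ⟪α i, β⟫ = ‖β‖ ^ 2) ∧ α i = v} :=
  stmt_15_general n k α β x hY
end

section
/- Let E = EuclideanSpace ℝ (Fin k), let α : Fin (n+1) → E, let β ∈ E, and let x : Fin (n+1) → ℂ be nonzero. Then β is the point of minimal norm of convexHull ℝ {α i | x i ≠ 0} if and only if β ∈ convexHull ℝ {α i | x i ≠ 0} and ⟪α i, β⟫ ≥ ‖β‖² for every i with x i ≠ 0. Moreover, if β ≠ 0 and β is the point of minimal norm of convexHull ℝ {α i | x i ≠ 0}, then there exists i with x i ≠ 0 and ⟪α i, β⟫ = ‖β‖². (For a torus acting diagonally on ℙⁿ, the stratum S_β = {[x] | β(x) = β} coincides with Y_β^{ss}: a point has β(x) = β exactly when all its support weights lie in the half-space H_β⁺ and β lies in its state polytope, and for β ≠ 0 at least one support weight then lies on the hyperplane H_β.) -/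
open scoped RealInnerProductSpace

/-!
A point `β` of a convex set `C` is its point of minimal norm exactly when `C` lies in the
half-space `H_β⁺`: one direction is the variational inequality characterising the projection of
`0` onto `C`, the other is Cauchy–Schwarz, `‖β‖² ≤ ⟪y, β⟫ ≤ ‖y‖ ‖β‖`. As `H_β⁺` is convex, a convex
hull lies in it as soon as its generators do. If no generator lay on `H_β`, they would all lie in
the open half-space `{v | ⟪v, β⟫ > ‖β‖²}`, which is convex too, so it would contain `β` itself:
absurd.
-/

section MinimalNorm

variable {F : Type*} [NormedAddCommGroup F] [InnerProductSpace ℝ F]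

theorem isLinearMap_real_inner_left (β : F) : IsLinearMap ℝ fun v : F => ⟪v, β⟫ :=
  ⟨fun u v => inner_add_left u v β, fun c v => real_inner_smul_left v β c⟩

theorem normSq_le_inner_of_isMinOn_norm {C : Set F} (hC : Convex ℝ C) {β : F} (hβ : β ∈ C)
    (hmin : IsMinOn (‖·‖) C β) {y : F} (hy : y ∈ C) : ‖β‖ ^ 2 ≤ ⟪y, β⟫ := by
  have hproj : ‖(0 : F) - β‖ = ⨅ w : C, ‖(0 : F) - w‖ := by
    simpa only [zero_sub, norm_neg] using (hmin.iInf_eq hβ).symm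
  have hvar := (norm_eq_iInf_iff_real_inner_le_zero hC hβ).mp hproj y hy
  rw [zero_sub, inner_neg_left, inner_sub_right, real_inner_self_eq_norm_sq,
    real_inner_comm] at hvar
  linarith

theorem norm_le_of_normSq_le_inner {β y : F} (h : ‖β‖ ^ 2 ≤ ⟪y, β⟫) : ‖β‖ ≤ ‖y‖ := by
  have hCS : ⟪y, β⟫ ≤ ‖y‖ * ‖β‖ := real_inner_le_norm y β
  nlinarith [norm_nonneg y, norm_nonneg β]

theorem isMinOn_norm_iff_normSq_le_inner {C : Set F} (hC : Convex ℝ C) {β : F} (hβ : β ∈ C) :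
    IsMinOn (‖·‖) C β ↔ ∀ y ∈ C, ‖β‖ ^ 2 ≤ ⟪y, β⟫ :=
  ⟨fun hmin _ hy => normSq_le_inner_of_isMinOn_norm hC hβ hmin hy,
    fun h => isMinOn_iff.mpr fun y hy => norm_le_of_normSq_le_inner (h y hy)⟩

theorem isMinOn_norm_convexHull_iff {S : Set F} {β : F} (hβ : β ∈ convexHull ℝ S) :
    IsMinOn (‖·‖) (convexHull ℝ S) β ↔ ∀ v ∈ S, ‖β‖ ^ 2 ≤ ⟪v, β⟫ := by
  rw [isMinOn_norm_iff_normSq_le_inner (convex_convexHull ℝ S) hβ]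
  refine ⟨fun h v hv => h v (subset_convexHull ℝ S hv), fun h => ?_⟩
  exact convexHull_min h (convex_halfSpace_ge (isLinearMap_real_inner_left β) _)

theorem exists_inner_eq_normSq_of_mem_convexHull {S : Set F} {β : F} (hβ : β ∈ convexHull ℝ S)
    (h : ∀ v ∈ S, ‖β‖ ^ 2 ≤ ⟪v, β⟫) : ∃ v ∈ S, ⟪v, β⟫ = ‖β‖ ^ 2 := by
  by_contra! hne
  have hstrict : convexHull ℝ S ⊆ {y | ‖β‖ ^ 2 < ⟪y, β⟫} :=
    convexHull_min (fun v hv => (h v hv).lt_of_ne (hne v hv).symm)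
      (convex_halfSpace_gt (isLinearMap_real_inner_left β) _)
  have hββ : ‖β‖ ^ 2 < ⟪β, β⟫ := hstrict hβ
  rw [real_inner_self_eq_norm_sq] at hββ
  exact hββ.false

end MinimalNorm

theorem stmt_16_general (n k : ℕ) (α : Fin (n + 1) → EuclideanSpace ℝ (Fin k))
    (β : EuclideanSpace ℝ (Fin k)) (x : Fin (n + 1) → ℂ) :
    ((β ∈ convexHull ℝ {v : EuclideanSpace ℝ (Fin k) | ∃ i, x i ≠ 0 ∧ α i = v} ∧
        ∀ y ∈ convexHull ℝ {v : EuclideanSpace ℝ (Fin k) | ∃ i, x i ≠ 0 ∧ α i = v},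
          ‖β‖ ≤ ‖y‖) ↔
      (β ∈ convexHull ℝ {v : EuclideanSpace ℝ (Fin k) | ∃ i, x i ≠ 0 ∧ α i = v} ∧
        ∀ i, x i ≠ 0 → ‖β‖ ^ 2 ≤ ⟪α i, β⟫)) ∧
    (β ≠ 0 →
      (β ∈ convexHull ℝ {v : EuclideanSpace ℝ (Fin k) | ∃ i, x i ≠ 0 ∧ α i = v} ∧
        ∀ y ∈ convexHull ℝ {v : EuclideanSpace ℝ (Fin k) | ∃ i, x i ≠ 0 ∧ α i = v},
          ‖β‖ ≤ ‖y‖) →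
      ∃ i, x i ≠ 0 ∧ ⟪α i, β⟫ = ‖β‖ ^ 2) := by
  set S : Set (EuclideanSpace ℝ (Fin k)) := {v | ∃ i, x i ≠ 0 ∧ α i = v}
  have hS : (∀ v ∈ S, ‖β‖ ^ 2 ≤ ⟪v, β⟫) ↔ ∀ i, x i ≠ 0 → ‖β‖ ^ 2 ≤ ⟪α i, β⟫ := by
    simp only [S, Set.mem_ofPred_eq, forall_exists_index, and_imp, forall_apply_eq_imp_iff₂]
  have hmin (hβ : β ∈ convexHull ℝ S) :
      (∀ y ∈ convexHull ℝ S, ‖β‖ ≤ ‖y‖) ↔ ∀ i, x i ≠ 0 → ‖β‖ ^ 2 ≤ ⟪α i, β⟫ :=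
    isMinOn_iff.symm.trans ((isMinOn_norm_convexHull_iff hβ).trans hS)
  refine ⟨⟨fun ⟨hβ, h⟩ => ⟨hβ, (hmin hβ).mp h⟩, fun ⟨hβ, h⟩ => ⟨hβ, (hmin hβ).mpr h⟩⟩, ?_⟩
  rintro - ⟨hβ, h⟩
  obtain ⟨_, ⟨i, hi, rfl⟩, hαi⟩ :=
    exists_inner_eq_normSq_of_mem_convexHull hβ (hS.mpr ((hmin hβ).mp h))
  exact ⟨i, hi, hαi⟩

/-- **The stratum `S_β` coincides with `Y_β^{ss}`**, for a torus acting diagonally on `ℙⁿ`: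
for nonzero `x`, the closest point `β(x)` of the state polytope of `x` to the origin equals
`β` if and only if `β` lies in the state polytope and every support weight of `x` lies in
the half-space `H_β⁺ = {v | ⟪v, β⟫ ≥ ‖β‖²}`; moreover if `β ≠ 0` is the closest point then
at least one support weight lies on the hyperplane `H_β = {v | ⟪v, β⟫ = ‖β‖²}`. -/
theorem stmt_16 (n k : ℕ) (α : Fin (n + 1) → EuclideanSpace ℝ (Fin k))
    (β : EuclideanSpace ℝ (Fin k)) (x : Fin (n + 1) → ℂ) (hx : x ≠ 0) :
    ((β ∈ convexHull ℝ {v : EuclideanSpace ℝ (Fin k) | ∃ i, x i ≠ 0 ∧ α i = v} ∧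
        ∀ y ∈ convexHull ℝ {v : EuclideanSpace ℝ (Fin k) | ∃ i, x i ≠ 0 ∧ α i = v},
          ‖β‖ ≤ ‖y‖) ↔
      (β ∈ convexHull ℝ {v : EuclideanSpace ℝ (Fin k) | ∃ i, x i ≠ 0 ∧ α i = v} ∧
        ∀ i, x i ≠ 0 → ‖β‖ ^ 2 ≤ ⟪α i, β⟫)) ∧
    (β ≠ 0 →
      (β ∈ convexHull ℝ {v : EuclideanSpace ℝ (Fin k) | ∃ i, x i ≠ 0 ∧ α i = v} ∧
        ∀ y ∈ convexHull ℝ {v : EuclideanSpace ℝ (Fin k) | ∃ i, x i ≠ 0 ∧ α i = v},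
          ‖β‖ ≤ ‖y‖) →
      ∃ i, x i ≠ 0 ∧ ⟪α i, β⟫ = ‖β‖ ^ 2) :=
  stmt_16_general n k α β x
end
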